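/- Let M = R[T]/T^{n+1} with generator shifted to degree l_0 (i.e. M = (R[T]/T^{n+1}){-l_0}), where T has degree 2. Then for a fixed integer l, multiplication by T^m gives an isomorphism M_{l−m} → M_{l+m} for all m ≥ 1 if and only if l_0 = l − n. -/
import Mathlib


open scoped Classical

/-- `inRange n l0 k` says that the graded cyclic module `(ℝ[T]/T^(n+1)){-l0}`
(`deg T = 2`, generator in degree `l0`) has a nonzero component in degree `k`,
namely `k ∈ {l0, l0+2, …, l0+2n}`. -/
def inRange (n : ℕ) (l0 : ℤ) (k : ℤ) : Prop := ∃ j : ℕ, j ≤ n ∧ k = l0 + 2 * j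

/-- The underlying space of `M = (ℝ[T]/T^(n+1)){-l0}`: the coordinate of a vector at `d` is its
degree-`d` coefficient. Multiplication by `T` (degree `2`) shifts coefficients and truncates
outside the allowed range of degrees. -/
noncomputable def Tmap (n : ℕ) (l0 : ℤ) : (ℤ → ℝ) →ₗ[ℝ] (ℤ → ℝ) where
  toFun f := fun d => if inRange n l0 d then f (d - 2) else 0
  map_add' f g := by funext d; by_cases h : inRange n l0 d <;> simp [h]
  map_smul' c f := by funext d; by_cases h : inRange n l0 d <;> simp [h]

/-- The degree-`k` homogeneous component of `(ℝ[T]/T^(n+1)){-l0}`. -/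
def comp (n : ℕ) (l0 : ℤ) (k : ℤ) : Submodule ℝ (ℤ → ℝ) where
  carrier := {f | ∀ d : ℤ, f d ≠ 0 → d = k ∧ inRange n l0 d}
  zero_mem' := by intro d hd; simp at hd
  add_mem' := by
    intro f g hf hg d hd
    by_cases h : f d = 0
    · exact hg d (by simpa [h] using hd)
    · exact hf d h
  smul_mem' := by
    intro c f hf d hd
    exact hf d (by intro h; exact hd (by simp [h]))

lemma mem_comp {n : ℕ} {l0 k : ℤ} {f : ℤ → ℝ} :
    f ∈ comp n l0 k ↔ ∀ d : ℤ, f d ≠ 0 → d = k ∧ inRange n l0 d := Iff.rfl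

lemma tmap_pow_apply (n : ℕ) (l0 : ℤ) (m : ℕ) (f : ℤ → ℝ) (d : ℤ) :
    (Tmap n l0 ^ m) f d =
      if ∀ k : ℕ, k < m → inRange n l0 (d - 2 * k) then f (d - 2 * m) else 0 := by
  induction m generalizing f with
  | zero => simp
  | succ m ih =>
    rw [pow_succ, Module.End.mul_apply, ih]
    simp only [Tmap, LinearMap.coe_mk, AddHom.coe_mk]
    by_cases h : ∀ k : ℕ, k < m → inRange n l0 (d - 2 * k)
    · rw [if_pos h]
      by_cases h2 : inRange n l0 (d - 2 * (m : ℤ))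
      · rw [if_pos h2, if_pos]
        · congr 1; push_cast; ring
        · intro k hk
          rcases Nat.lt_succ_iff_lt_or_eq.mp hk with hk | rfl
          · exact h k hk
          · exact h2
      · rw [if_neg h2, if_neg]
        intro hall; exact h2 (hall m (Nat.lt_succ_self m))
    · rw [if_neg h, if_neg]
      intro hall
      exact h fun k hk => hall k (hk.trans (Nat.lt_succ_self m))

lemma comp_eq_zero {n : ℕ} {l0 k : ℤ} (hk : ¬ inRange n l0 k) {f : ℤ → ℝ}
    (hf : f ∈ comp n l0 k) : f = 0 := by
  funext d
  by_contra h
  obtain ⟨rfl, h2⟩ := hf d h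
  exact hk h2

lemma bijOn_iff (n : ℕ) (l0 l : ℤ) (m : ℕ) (hm : 1 ≤ m) :
    Set.BijOn (⇑(Tmap n l0 ^ m)) (comp n l0 (l - m) : Set (ℤ → ℝ))
        (comp n l0 (l + m) : Set (ℤ → ℝ))
      ↔ (inRange n l0 (l - m) ↔ inRange n l0 (l + m)) := by
  constructor
  · intro hb
    constructor
    · intro h1
      by_contra h2
      set δ : ℤ → ℝ := fun d => if d = l - m then 1 else 0 with hδdef
      have hδ : δ ∈ comp n l0 (l - m) := by
        intro d hd
        by_cases h : d = l - m
        · exact ⟨h, h ▸ h1⟩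
        · simp [hδdef, h] at hd
      have himg : ∀ d, (Tmap n l0 ^ m) δ d = 0 := by
        intro d
        rw [tmap_pow_apply]
        split_ifs with hc
        · by_cases hd : d - 2 * m = l - m
          · exfalso
            have h0 := hc 0 hm
            simp only [Nat.cast_zero, mul_zero, sub_zero] at h0
            have : d = l + m := by omega
            exact h2 (this ▸ h0)
          · simp [hδdef, hd]
        · rfl
      have heq : (Tmap n l0 ^ m) δ = (Tmap n l0 ^ m) 0 := by
        funext d; rw [map_zero]; exact himg d
      have := hb.injOn hδ (Submodule.zero_mem _) heq
      have h10 := congrFun this (l - m)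
      simp [hδdef] at h10
    · intro h2
      by_contra h1
      set δ : ℤ → ℝ := fun d => if d = l + m then 1 else 0 with hδdef
      have hδ : δ ∈ comp n l0 (l + m) := by
        intro d hd
        by_cases h : d = l + m
        · exact ⟨h, h ▸ h2⟩
        · simp [hδdef, h] at hd
      obtain ⟨f, hf, hfeq⟩ := hb.surjOn hδ
      have hf0 : f = 0 := comp_eq_zero h1 hf
      rw [hf0, map_zero] at hfeq
      have h10 := congrFun hfeq (l + m)
      simp [hδdef] at h10
  · intro hiff
    by_cases h1 : inRange n l0 (l - m)
    · have h2 := hiff.mp h1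
      obtain ⟨j, hj, hje⟩ := h1
      obtain ⟨j', hj', hje'⟩ := h2
      have hchain : ∀ k : ℕ, k < m → inRange n l0 (l + m - 2 * k) := by
        intro k hk
        exact ⟨j' - k, by omega, by omega⟩
      have hval : ∀ f ∈ comp n l0 (l - m), ∀ d,
          (Tmap n l0 ^ m) f d = if d = l + m then f (l - m) else 0 := by
        intro f hf d
        rw [tmap_pow_apply]
        by_cases hd : d = l + m
        · subst hd
          rw [if_pos hchain, if_pos rfl]
          congr 1; ring
        · rw [if_neg hd]
          split_ifs with hc
          · by_contra h
            have := (hf _ h).1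
            omega
          · rfl
      refine ⟨?_, ?_, ?_⟩
      · intro f hf d hd
        rw [hval f hf d] at hd
        by_cases h : d = l + m
        · exact ⟨h, h ▸ ⟨j', hj', hje'⟩⟩
        · simp [h] at hd
      · intro f hf g hg heq
        funext d
        by_cases h : d = l - m
        · subst h
          have := congrFun heq (l + m)
          rw [hval f hf, hval g hg, if_pos rfl, if_pos rfl] at this
          exact this
        · rw [show f d = 0 by by_contra hx; exact h (hf d hx).1,
            show g d = 0 by by_contra hx; exact h (hg d hx).1]
      · intro g hg
        refine ⟨fun d => if d = l - m then g (l + m) else 0, ?_, ?_⟩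
        · intro d hd
          by_cases h : d = l - m
          · exact ⟨h, h ▸ ⟨j, hj, hje⟩⟩
          · simp [h] at hd
        · funext d
          rw [hval _ (by
            intro d' hd'
            by_cases h : d' = l - m
            · exact ⟨h, h ▸ ⟨j, hj, hje⟩⟩
            · simp [h] at hd') d]
          by_cases h : d = l + m
          · simp [h]
          · rw [if_neg h]
            by_contra hx
            exact h ((hg d (Ne.symm hx)).1)
    · have h2 : ¬ inRange n l0 (l + m) := fun h => h1 (hiff.mpr h)
      refine ⟨?_, ?_, ?_⟩
      · intro f hf
        rw [comp_eq_zero h1 hf, map_zero]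
        exact Submodule.zero_mem _
      · intro f hf g hg _
        rw [comp_eq_zero h1 hf, comp_eq_zero h1 hg]
      · intro g hg
        exact ⟨0, Submodule.zero_mem _, by rw [map_zero, comp_eq_zero h2 hg]⟩

lemma key (n : ℕ) (l0 l : ℤ) :
    (∀ m : ℕ, 1 ≤ m → (inRange n l0 (l - m) ↔ inRange n l0 (l + m))) ↔ l0 = l - n := by
  constructor
  · intro H
    by_contra hne
    rcases lt_or_gt_of_ne hne with hlt | hgt
    · set m := (l - l0).toNat with hmdef
      have hm : (m : ℤ) = l - l0 := Int.toNat_of_nonneg (by omega)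
      have hm1 : 1 ≤ m := by omega
      have h1 : inRange n l0 (l - m) := ⟨0, Nat.zero_le n, by omega⟩
      obtain ⟨j, hj, hje⟩ := (H m hm1).mp h1
      omega
    · set m := (l0 + 2 * n - l).toNat with hmdef
      have hm : (m : ℤ) = l0 + 2 * n - l := Int.toNat_of_nonneg (by omega)
      have hm1 : 1 ≤ m := by omega
      have h2 : inRange n l0 (l + m) := ⟨n, le_refl n, by omega⟩
      obtain ⟨j, hj, hje⟩ := (H m hm1).mpr h2
      omega
  · intro h
    subst h
    intro m _
    constructor
    · rintro ⟨j, hj, hje⟩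
      exact ⟨j + m, by omega, by omega⟩
    · rintro ⟨j, hj, hje⟩
      exact ⟨j - m, by omega, by omega⟩

/-- Let `M = (ℝ[T]/T^(n+1)){-l0}` (`deg T = 2`, generator in degree `l0`).
For a fixed `l : ℤ`, multiplication by `T^m` gives an isomorphism (a bijection)
`M_{l-m} → M_{l+m}` for all `m ≥ 1` if and only if `l0 = l - n`. -/
theorem stmt1 (n : ℕ) (l0 : ℤ) (l : ℤ) :
    (∀ m : ℕ, 1 ≤ m →
      Set.BijOn (⇑(Tmap n l0 ^ m)) (comp n l0 (l - m) : Set (ℤ → ℝ))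
        (comp n l0 (l + m) : Set (ℤ → ℝ)))
    ↔ l0 = l - n := by
  rw [← key n l0 l]
  exact forall₂_congr fun m hm => bijOn_iff n l0 l m hm
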